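/- arXiv:2101.11121 — 10 statements merged into one kernel-verified Lean document; each statement's English description precedes it below -/
import Mathlib

section
/- Let A, B, C ∈ ℝ with C ≠ 0. If p = (x,y,z) satisfies z = ½(1 − x² − y²) and Ax + By + Cz = 0, then (x,y) ≠ (0,0), and the point (X,Y) = (x,y)/(x²+y²) satisfies (X + A/C)² + (Y + B/C)² = 1 + (A² + B²)/C². Thus the stereographic image of an r-geodesic of Σ² not through the North pole is contained in a circle whose radius R and center 𝒞 = (−A/C, −B/C) satisfy R² = 1 + |𝒞|². -/
/-! Substituting the sphere into the plane gives `2 (a x + b y) = x² + y² - 1` with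
`a = A / C`, `b = B / C`. Under the inversion `(X, Y) = (x, y) / r`, `r = x² + y²`, one has
`X² + Y² = 1 / r` and `2 (a X + b Y) = 1 - 1 / r`, so `(X + a)² + (Y + b)² = 1 + a² + b²`. -/

section InversionOfCircle

variable {a b x y : ℝ}

theorem sq_add_sq_ne_zero_of_two_mul_add_eq (h : 2 * (a * x + b * y) = x ^ 2 + y ^ 2 - 1) :
    x ^ 2 + y ^ 2 ≠ 0 := by
  intro hr
  obtain ⟨rfl, rfl⟩ : x = 0 ∧ y = 0 := by
    rw [sq, sq] at hr
    exact mul_self_add_mul_self_eq_zero.mp hr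
  norm_num at h

theorem div_add_sq_add_div_add_sq_eq (h : 2 * (a * x + b * y) = x ^ 2 + y ^ 2 - 1) :
    (x / (x ^ 2 + y ^ 2) + a) ^ 2 + (y / (x ^ 2 + y ^ 2) + b) ^ 2 = 1 + a ^ 2 + b ^ 2 := by
  have hr := sq_add_sq_ne_zero_of_two_mul_add_eq h
  field_simp
  linear_combination (x ^ 2 + y ^ 2) * h

end InversionOfCircle

theorem two_mul_div_add_div_eq_of_parabolic_sphere {A B C x y z : ℝ} (hC : C ≠ 0)
    (hS : z = (1 - x ^ 2 - y ^ 2) / 2) (hP : A * x + B * y + C * z = 0) :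
    2 * (A / C * x + B / C * y) = x ^ 2 + y ^ 2 - 1 := by
  subst hS
  field_simp
  linear_combination 2 * hP

/-- If C ≠ 0 and p = (x,y,z) lies on the parabolic unit sphere z = ½(1 − x² − y²) and on
the plane Ax + By + Cz = 0 through the center, then (x,y) ≠ (0,0) and the stereographic
image (X,Y) = (x,y)/(x²+y²) lies on the circle of center 𝒞 = (−A/C, −B/C) and radius R
with R² = 1 + |𝒞|². -/
theorem stmt4 (A B C x y z : ℝ) (hC : C ≠ 0)
    (hS : z = (1 - x ^ 2 - y ^ 2) / 2)
    (hP : A * x + B * y + C * z = 0) :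
    (x, y) ≠ (0, 0) ∧
    (x / (x ^ 2 + y ^ 2) + A / C) ^ 2 + (y / (x ^ 2 + y ^ 2) + B / C) ^ 2 =
      1 + (A ^ 2 + B ^ 2) / C ^ 2 := by
  have hline := two_mul_div_add_div_eq_of_parabolic_sphere hC hS hP
  have hr := sq_add_sq_ne_zero_of_two_mul_add_eq hline
  refine ⟨fun hxy => hr ?_, ?_⟩
  · obtain ⟨rfl, rfl⟩ := Prod.mk.inj hxy
    norm_num
  · rw [div_add_sq_add_div_add_sq_eq hline, div_pow, div_pow, add_div, add_assoc]
end

section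
/- Let a, b ∈ ℝ and R > 0 with R² = 1 + a² + b². Then for every θ ∈ ℝ the point (X,Y) = (a + R cos θ, b + R sin θ) is nonzero, and its inverse stereographic image σ(X + iY) = (X/(X²+Y²), Y/(X²+Y²), ½ − 1/(2(X²+Y²))) lies on the plane −a x − b y + z = 0 through the origin. Hence every circle in ℂ whose radius R and center 𝒞 = (a,b) satisfy R² = 1 + |𝒞|² is mapped by the inverse parabolic stereographic projection into an r-geodesic of Σ². -/
noncomputable section

/-- The unit sphere of parabolic type in simply isotropic space, centered at the origin:
z = ½(1 − x² − y²). -/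
def Sigma2 : Set (ℝ × ℝ × ℝ) := {p | p.2.2 = (1 - p.1 ^ 2 - p.2.1 ^ 2) / 2}

/-- The inverse parabolic stereographic projection σ : ℂ \ {0} → Σ²,
σ(x+iy) = (x/(x²+y²), y/(x²+y²), ½ − 1/(2(x²+y²))). -/
def stereoInv (w : ℂ) : ℝ × ℝ × ℝ :=
  (w.re / (w.re ^ 2 + w.im ^ 2), w.im / (w.re ^ 2 + w.im ^ 2),
    1 / 2 - 1 / (2 * (w.re ^ 2 + w.im ^ 2)))

/-- If R > 0 and R² = 1 + a² + b², then every point (X,Y) = (a + R cos θ, b + R sin θ) of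
the circle of center (a,b) and radius R is nonzero, and its inverse stereographic image
σ(X + iY) lies on Σ² and on the plane −ax − by + z = 0 through the origin; hence the
circle is mapped into an r-geodesic of Σ². -/
theorem stmt6 (a b R : ℝ) (hR : 0 < R) (hRel : R ^ 2 = 1 + a ^ 2 + b ^ 2) :
    ∀ θ : ℝ,
      ((a + R * Real.cos θ, b + R * Real.sin θ) : ℝ × ℝ) ≠ (0, 0) ∧
      stereoInv (((a + R * Real.cos θ : ℝ) : ℂ) + ((b + R * Real.sin θ : ℝ) : ℂ) * Complex.I)
        ∈ Sigma2 ∧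
      -a * (stereoInv (((a + R * Real.cos θ : ℝ) : ℂ)
              + ((b + R * Real.sin θ : ℝ) : ℂ) * Complex.I)).1
        - b * (stereoInv (((a + R * Real.cos θ : ℝ) : ℂ)
              + ((b + R * Real.sin θ : ℝ) : ℂ) * Complex.I)).2.1
        + (stereoInv (((a + R * Real.cos θ : ℝ) : ℂ)
              + ((b + R * Real.sin θ : ℝ) : ℂ) * Complex.I)).2.2 = 0 := by
  intro θ
  set X := a + R * Real.cos θ with hX
  set Y := b + R * Real.sin θ with hY
  have hpyth : Real.sin θ ^ 2 + Real.cos θ ^ 2 = 1 := Real.sin_sq_add_cos_sq θ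
  have hkey : X ^ 2 + Y ^ 2 = 1 + 2 * a * X + 2 * b * Y := by
    rw [hX, hY]; nlinarith [hpyth]
  have hne : (X, Y) ≠ ((0 : ℝ), 0) := by
    intro h
    have h1 : X = 0 := congrArg Prod.fst h
    have h2 : Y = 0 := congrArg Prod.snd h
    rw [h1, h2] at hkey; norm_num at hkey
  have hS : X ^ 2 + Y ^ 2 ≠ 0 := by
    intro h
    have hx : X = 0 := by nlinarith [sq_nonneg X, sq_nonneg Y]
    have hy : Y = 0 := by nlinarith [sq_nonneg X, sq_nonneg Y]
    exact hne (by rw [hx, hy])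
  have hre : (((X : ℝ) : ℂ) + ((Y : ℝ) : ℂ) * Complex.I).re = X := by simp
  have him : (((X : ℝ) : ℂ) + ((Y : ℝ) : ℂ) * Complex.I).im = Y := by simp
  refine ⟨hne, ?_, ?_⟩
  · simp only [Sigma2, stereoInv, hre, him, Set.mem_setOf_eq]
    field_simp
    ring
  · simp only [stereoInv, hre, him]
    field_simp
    nlinarith [hkey]
end
end

section
/- Let A, B, C, D ∈ ℝ with C + 2D ≠ 0. If p = (x,y,z) satisfies z = ½(1 − x² − y²), Ax + By + Cz + D = 0, and (x,y) ≠ (0,0), then the point (X,Y) = (x,y)/(x²+y²) satisfies (X + A/(C+2D))² + (Y + B/(C+2D))² = (A² + B² + C(C+2D))/(C+2D)². Thus the stereographic image of a small circle of Σ² avoiding the North pole is contained in a circle in ℂ. -/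
/-!
Write r = x² + y² and k = C + 2D. On Σ² we have z = (1 − r)/2, so the plane equation reads
2Ax + 2By + k − C r = 0. Dividing by r and using 1/r = X² + Y² for the image (X, Y) = (x, y)/r
turns it into k (X² + Y²) + 2AX + 2BY − C = 0, a circle once k ≠ 0; completing the square gives
its centre and radius. The plane misses the North pole (r = 0 forces C/2 + D = 0), so r ≠ 0.
-/

theorem add_div_sq_add_add_div_sq_eq_of_circle {K : Type*} [Field K] {k A B C X Y : K}
    (hk : k ≠ 0) (h : k * (X ^ 2 + Y ^ 2) + 2 * A * X + 2 * B * Y - C = 0) :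
    (X + A / k) ^ 2 + (Y + B / k) ^ 2 = (A ^ 2 + B ^ 2 + C * k) / k ^ 2 := by
  field_simp
  linear_combination k * h

theorem sq_add_sq_ne_zero_of_mem_sphere_inter_plane {A B C D x y z : ℝ} (hCD : C + 2 * D ≠ 0)
    (hS : z = (1 - x ^ 2 - y ^ 2) / 2) (hP : A * x + B * y + C * z + D = 0) :
    x ^ 2 + y ^ 2 ≠ 0 := by
  intro hr
  obtain ⟨rfl, rfl⟩ : x = 0 ∧ y = 0 :=
    mul_self_add_mul_self_eq_zero.mp (by simpa only [pow_two] using hr)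
  apply hCD
  linear_combination 2 * hP - 2 * C * hS

theorem stereographic_image_mem_circle {A B C D x y z : ℝ}
    (hS : z = (1 - x ^ 2 - y ^ 2) / 2) (hP : A * x + B * y + C * z + D = 0)
    (hr : x ^ 2 + y ^ 2 ≠ 0) :
    (C + 2 * D) * ((x / (x ^ 2 + y ^ 2)) ^ 2 + (y / (x ^ 2 + y ^ 2)) ^ 2)
      + 2 * A * (x / (x ^ 2 + y ^ 2)) + 2 * B * (y / (x ^ 2 + y ^ 2)) - C = 0 := by
  have hplane : 2 * A * x + 2 * B * y + (C + 2 * D) - C * (x ^ 2 + y ^ 2) = 0 := by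
    linear_combination 2 * hP - 2 * C * hS
  field_simp
  linear_combination hplane

theorem stmt7_general (A B C D x y z : ℝ) (hCD : C + 2 * D ≠ 0)
    (hS : z = (1 - x ^ 2 - y ^ 2) / 2)
    (hP : A * x + B * y + C * z + D = 0) :
    (x / (x ^ 2 + y ^ 2) + A / (C + 2 * D)) ^ 2 +
      (y / (x ^ 2 + y ^ 2) + B / (C + 2 * D)) ^ 2 =
      (A ^ 2 + B ^ 2 + C * (C + 2 * D)) / (C + 2 * D) ^ 2 :=
  add_div_sq_add_add_div_sq_eq_of_circle hCD <| stereographic_image_mem_circle hS hP <|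
    sq_add_sq_ne_zero_of_mem_sphere_inter_plane hCD hS hP

/-- If C + 2D ≠ 0 and p = (x,y,z) ≠ N lies on the parabolic unit sphere
z = ½(1 − x² − y²) and on the plane Ax + By + Cz + D = 0 (a small circle of Σ² avoiding
the North pole), then the stereographic image (X,Y) = (x,y)/(x²+y²) lies on the circle
(X + A/(C+2D))² + (Y + B/(C+2D))² = (A² + B² + C(C+2D))/(C+2D)². -/
theorem stmt7 (A B C D x y z : ℝ) (hCD : C + 2 * D ≠ 0)
    (hS : z = (1 - x ^ 2 - y ^ 2) / 2)
    (hP : A * x + B * y + C * z + D = 0) (hxy : (x, y) ≠ (0, 0)) :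
    (x / (x ^ 2 + y ^ 2) + A / (C + 2 * D)) ^ 2 +
      (y / (x ^ 2 + y ^ 2) + B / (C + 2 * D)) ^ 2 =
      (A ^ 2 + B ^ 2 + C * (C + 2 * D)) / (C + 2 * D) ^ 2 :=
  stmt7_general A B C D x y z hCD hS hP
end

section
/- Let A, B, C, D ∈ ℝ with C ≠ 0 and C + 2D = 0. If p = (x,y,z) satisfies z = ½(1 − x² − y²), Ax + By + Cz + D = 0, and (x,y) ≠ (0,0), then the point (X,Y) = (x,y)/(x²+y²) satisfies AX + BY = C/2. Thus the stereographic image of a small circle of Σ² passing through the North pole (cut by a non-vertical plane) is contained in a straight line in ℂ not passing through the origin. -/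
/-- If C ≠ 0 and C + 2D = 0 and p = (x,y,z) ≠ N lies on the parabolic unit sphere
z = ½(1 − x² − y²) and on the non-vertical plane Ax + By + Cz + D = 0 through the North
pole, then the stereographic image (X,Y) = (x,y)/(x²+y²) lies on the straight line
AX + BY = C/2, which does not pass through the origin. -/
theorem stmt8 (A B C D x y z : ℝ) (hC : C ≠ 0) (hCD : C + 2 * D = 0)
    (hS : z = (1 - x ^ 2 - y ^ 2) / 2)
    (hP : A * x + B * y + C * z + D = 0) (hxy : (x, y) ≠ (0, 0)) :
    A * (x / (x ^ 2 + y ^ 2)) + B * (y / (x ^ 2 + y ^ 2)) = C / 2 := by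
  have hne : x ^ 2 + y ^ 2 ≠ 0 := by
    intro h
    have hx : x = 0 := by nlinarith [sq_nonneg x, sq_nonneg y]
    have hy : y = 0 := by nlinarith [sq_nonneg x, sq_nonneg y]
    exact hxy (by simp [hx, hy])
  field_simp
  linear_combination 2*hP - 2*C*hS - hCD
end

section
/- Let U ⊆ ℂ be open, let φ₁, φ₃ : U → ℂ be holomorphic with primitives h₁, h₃, and define x(u+iv) = (Re h₁, −Im h₁, Re h₃). At every z₀ ∈ U with φ₁(z₀) ≠ 0, the third component of x_u × x_v equals −|φ₁(z₀)|² ≠ 0, and the second fundamental form coefficients with respect to the minimal normal satisfy h₁₁ = Re[φ₁(φ₃/φ₁)'](z₀), h₁₂ = −Im[φ₁(φ₃/φ₁)'](z₀), and h₂₂ = −h₁₁, where φ₁(φ₃/φ₁)' = φ₃' − φ₃φ₁'/φ₁. -/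
noncomputable section

/-- Partial derivative of a map on ℂ ≅ ℝ² in the u-direction (real direction 1). -/
def du {E : Type*} [NormedAddCommGroup E] [NormedSpace ℝ E]
    (f : ℂ → E) : ℂ → E := fun z => fderiv ℝ f z 1

/-- Partial derivative of a map on ℂ ≅ ℝ² in the v-direction (direction i). -/
def dv {E : Type*} [NormedAddCommGroup E] [NormedSpace ℝ E]
    (f : ℂ → E) : ℂ → E := fun z => fderiv ℝ f z Complex.I

def isoInner (a b : ℝ × ℝ × ℝ) : ℝ := a.1 * b.1 + a.2.1 * b.2.1

def dot3 (a b : ℝ × ℝ × ℝ) : ℝ := a.1 * b.1 + a.2.1 * b.2.1 + a.2.2 * b.2.2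

def cross3 (a b : ℝ × ℝ × ℝ) : ℝ × ℝ × ℝ :=
  (a.2.1 * b.2.2 - a.2.2 * b.2.1, a.2.2 * b.1 - a.1 * b.2.2, a.1 * b.2.1 - a.2.1 * b.1)

def g11 (x : ℂ → ℝ × ℝ × ℝ) (z : ℂ) : ℝ := isoInner (du x z) (du x z)
def g12 (x : ℂ → ℝ × ℝ × ℝ) (z : ℂ) : ℝ := isoInner (du x z) (dv x z)
def g22 (x : ℂ → ℝ × ℝ × ℝ) (z : ℂ) : ℝ := isoInner (dv x z) (dv x z)

/-- The minimal normal: the unique vector of the form (n₁,n₂,1) Euclidean-orthogonal to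
x_u and x_v (obtained by normalizing the cross product so its third component is 1). -/
def Nm (x : ℂ → ℝ × ℝ × ℝ) (z : ℂ) : ℝ × ℝ × ℝ :=
  ((cross3 (du x z) (dv x z)).1 / (cross3 (du x z) (dv x z)).2.2,
   (cross3 (du x z) (dv x z)).2.1 / (cross3 (du x z) (dv x z)).2.2, 1)

def h11 (x : ℂ → ℝ × ℝ × ℝ) (z : ℂ) : ℝ := dot3 (du (du x) z) (Nm x z)
def h12 (x : ℂ → ℝ × ℝ × ℝ) (z : ℂ) : ℝ := dot3 (du (dv x) z) (Nm x z)
def h22 (x : ℂ → ℝ × ℝ × ℝ) (z : ℂ) : ℝ := dot3 (dv (dv x) z) (Nm x z)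

def Kcurv (x : ℂ → ℝ × ℝ × ℝ) (z : ℂ) : ℝ :=
  (h11 x z * h22 x z - (h12 x z) ^ 2) / (g11 x z * g22 x z - (g12 x z) ^ 2)

def meanH (x : ℂ → ℝ × ℝ × ℝ) (z : ℂ) : ℝ :=
  (g11 x z * h22 x z - 2 * g12 x z * h12 x z + g22 x z * h11 x z) /
    (2 * (g11 x z * g22 x z - (g12 x z) ^ 2))

/-!
Because h₁ and h₃ are holomorphic, x_u = (Re φ₁, −Im φ₁, Re φ₃) and x_v is the same
expression in (iφ₁, iφ₃): a real derivative in direction i multiplies the complex one by i.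
The cross product of these two vectors is (conj φ₁ · φ₃, −|φ₁|²) read in ℂ × ℝ, so
N_m = (−Re(φ₃/φ₁), −Im(φ₃/φ₁), 1), and the Euclidean product of (Re a, −Im a, Re b) with it is
Re(b − a φ₃/φ₁). The second derivatives x_uu, x_uv, x_vv are the same expressions in
(φ₁', φ₃'), (iφ₁', iφ₃') and (−φ₁', −φ₃'), which gives h₁₁, h₁₂ and h₂₂.
-/

open Complex ComplexConjugate Filter Topology

def weierstrassVec (a b : ℂ) : ℝ × ℝ × ℝ := (a.re, -a.im, b.re)

def weierstrassMap (f g : ℂ → ℂ) : ℂ → ℝ × ℝ × ℝ := fun w => weierstrassVec (f w) (g w)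

theorem weierstrassMap_apply (f g : ℂ → ℂ) (w : ℂ) :
    weierstrassMap f g w = weierstrassVec (f w) (g w) := rfl

theorem dot3_weierstrassVec (a b q : ℂ) :
    dot3 (weierstrassVec a b) (-q.re, -q.im, 1) = (b - a * q).re := by
  simp only [dot3, weierstrassVec, sub_re, mul_re]
  ring

theorem cross3_weierstrassVec (c₁ c₃ : ℂ) :
    cross3 (weierstrassVec c₁ c₃) (weierstrassVec (I * c₁) (I * c₃)) =
      ((conj c₁ * c₃).re, (conj c₁ * c₃).im, -‖c₁‖ ^ 2) := by
  simp only [cross3, weierstrassVec, mul_re, mul_im, I_re, I_im, conj_re, conj_im,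
    Complex.sq_norm, normSq_apply, Prod.mk.injEq]
  refine ⟨by ring, by ring, by ring⟩

theorem Nm_eq_of_du_dv {x : ℂ → ℝ × ℝ × ℝ} {z c₁ c₃ : ℂ} (hc₁ : c₁ ≠ 0)
    (hu : du x z = weierstrassVec c₁ c₃) (hv : dv x z = weierstrassVec (I * c₁) (I * c₃)) :
    Nm x z = (-(c₃ / c₁).re, -(c₃ / c₁).im, 1) := by
  have hn : normSq c₁ ≠ 0 := normSq_eq_zero.not.mpr hc₁
  rw [Nm, hu, hv, cross3_weierstrassVec]
  simp only [Complex.sq_norm, div_re, div_im, mul_re, mul_im, conj_re, conj_im, Prod.mk.injEq]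
  refine ⟨?_, ?_, trivial⟩ <;> field_simp <;> ring

theorem fderiv_weierstrassMap_apply {f g : ℂ → ℂ} {a b z : ℂ} (hf : HasDerivAt f a z)
    (hg : HasDerivAt g b z) (d : ℂ) :
    fderiv ℝ (weierstrassMap f g) z d = weierstrassVec (d * a) (d * b) := by
  have hf' := hf.hasFDerivAt.restrictScalars ℝ
  have hg' := hg.hasFDerivAt.restrictScalars ℝ
  have h := (reCLM.hasFDerivAt.comp z hf').prodMk
    ((imCLM.hasFDerivAt.comp z hf').neg.prodMk (reCLM.hasFDerivAt.comp z hg'))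
  have hL : fderiv ℝ (weierstrassMap f g) z = _ := h.fderiv
  rw [hL]
  simp [weierstrassVec]

theorem du_weierstrassMap {f g : ℂ → ℂ} {a b z : ℂ} (hf : HasDerivAt f a z)
    (hg : HasDerivAt g b z) : du (weierstrassMap f g) z = weierstrassVec a b :=
  (fderiv_weierstrassMap_apply hf hg 1).trans (by rw [one_mul, one_mul])

theorem dv_weierstrassMap {f g : ℂ → ℂ} {a b z : ℂ} (hf : HasDerivAt f a z)
    (hg : HasDerivAt g b z) : dv (weierstrassMap f g) z = weierstrassVec (I * a) (I * b) :=
  fderiv_weierstrassMap_apply hf hg I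

section Congr

variable {E : Type*} [NormedAddCommGroup E] [NormedSpace ℝ E] {f g : ℂ → E} {z : ℂ}

theorem du_eq_of_eventuallyEq (h : f =ᶠ[𝓝 z] g) : du f z = du g z := by
  simp only [du, h.fderiv_eq]

theorem dv_eq_of_eventuallyEq (h : f =ᶠ[𝓝 z] g) : dv f z = dv g z := by
  simp only [dv, h.fderiv_eq]

end Congr

section Primitives

variable {U : Set ℂ} {f g f' g' : ℂ → ℂ} {z : ℂ}

theorem du_weierstrassMap_eventuallyEq (hU : U ∈ 𝓝 z)
    (hf : ∀ w ∈ U, HasDerivAt f (f' w) w) (hg : ∀ w ∈ U, HasDerivAt g (g' w) w) :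
    du (weierstrassMap f g) =ᶠ[𝓝 z] weierstrassMap f' g' :=
  eventuallyEq_of_mem hU fun w hw => du_weierstrassMap (hf w hw) (hg w hw)

theorem dv_weierstrassMap_eventuallyEq (hU : U ∈ 𝓝 z)
    (hf : ∀ w ∈ U, HasDerivAt f (f' w) w) (hg : ∀ w ∈ U, HasDerivAt g (g' w) w) :
    dv (weierstrassMap f g) =ᶠ[𝓝 z] weierstrassMap (fun w => I * f' w) (fun w => I * g' w) :=
  eventuallyEq_of_mem hU fun w hw => dv_weierstrassMap (hf w hw) (hg w hw)

end Primitives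

/-- For the Weierstrass map x = (Re h₁, −Im h₁, Re h₃) built from the holomorphic curve
φ = (φ₁, iφ₁, φ₃), at every z₀ with φ₁(z₀) ≠ 0 the third component of x_u × x_v equals
−|φ₁(z₀)|² ≠ 0, and the second fundamental form coefficients with respect to the minimal
normal satisfy h₁₁ = Re[φ₁(φ₃/φ₁)'], h₁₂ = −Im[φ₁(φ₃/φ₁)'] and h₂₂ = −h₁₁ at z₀, where
φ₁(φ₃/φ₁)' = φ₃' − φ₃φ₁'/φ₁. -/
theorem stmt10 (U : Set ℂ) (hU : IsOpen U) (φ₁ φ₃ h₁ h₃ : ℂ → ℂ)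
    (hφ₁ : DifferentiableOn ℂ φ₁ U) (hφ₃ : DifferentiableOn ℂ φ₃ U)
    (hh₁ : ∀ z ∈ U, HasDerivAt h₁ (φ₁ z) z)
    (hh₃ : ∀ z ∈ U, HasDerivAt h₃ (φ₃ z) z) :
    ∀ z₀ ∈ U, φ₁ z₀ ≠ 0 →
      (cross3 (du (fun w => ((h₁ w).re, -(h₁ w).im, (h₃ w).re)) z₀)
          (dv (fun w => ((h₁ w).re, -(h₁ w).im, (h₃ w).re)) z₀)).2.2 =
        -(‖φ₁ z₀‖ ^ 2) ∧
      -(‖φ₁ z₀‖ ^ 2) ≠ 0 ∧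
      h11 (fun w => ((h₁ w).re, -(h₁ w).im, (h₃ w).re)) z₀ =
        (deriv φ₃ z₀ - φ₃ z₀ * deriv φ₁ z₀ / φ₁ z₀).re ∧
      h12 (fun w => ((h₁ w).re, -(h₁ w).im, (h₃ w).re)) z₀ =
        -(deriv φ₃ z₀ - φ₃ z₀ * deriv φ₁ z₀ / φ₁ z₀).im ∧
      h22 (fun w => ((h₁ w).re, -(h₁ w).im, (h₃ w).re)) z₀ =
        -h11 (fun w => ((h₁ w).re, -(h₁ w).im, (h₃ w).re)) z₀ := by
  intro z₀ hz hc
  rw [show (fun w => ((h₁ w).re, -(h₁ w).im, (h₃ w).re)) = weierstrassMap h₁ h₃ from rfl]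
  have hU₀ : U ∈ 𝓝 z₀ := hU.mem_nhds hz
  have ha₁ := (hφ₁.differentiableAt hU₀).hasDerivAt
  have ha₃ := (hφ₃.differentiableAt hU₀).hasDerivAt
  have hDu := du_weierstrassMap_eventuallyEq hU₀ hh₁ hh₃
  have hDv := dv_weierstrassMap_eventuallyEq hU₀ hh₁ hh₃
  have hN := Nm_eq_of_du_dv hc hDu.eq_of_nhds hDv.eq_of_nhds
  have huu := (du_eq_of_eventuallyEq hDu).trans (du_weierstrassMap ha₁ ha₃)
  have huv := (du_eq_of_eventuallyEq hDv).trans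
    (du_weierstrassMap (ha₁.const_mul I) (ha₃.const_mul I))
  have hvv := (dv_eq_of_eventuallyEq hDv).trans
    (dv_weierstrassMap (ha₁.const_mul I) (ha₃.const_mul I))
  have h11_eq :
      h11 (weierstrassMap h₁ h₃) z₀ = (deriv φ₃ z₀ - φ₃ z₀ * deriv φ₁ z₀ / φ₁ z₀).re := by
    rw [h11, hN, huu, dot3_weierstrassVec]
    congr 1
    ring
  refine ⟨?_, by simpa using hc, h11_eq, ?_, ?_⟩
  · rw [hDu.eq_of_nhds, hDv.eq_of_nhds, weierstrassMap_apply, weierstrassMap_apply,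
      cross3_weierstrassVec]
  · rw [h12, hN, huv, dot3_weierstrassVec, ← I_mul_re]
    congr 1
    ring
  · rw [h22, h11_eq, hN, hvv, dot3_weierstrassVec, ← neg_re]
    congr 1
    linear_combination (deriv φ₃ z₀ - deriv φ₁ z₀ * (φ₃ z₀ / φ₁ z₀)) * I_sq
end
end

section
/- Let U ⊆ ℂ be open, let φ₁, φ₃ : U → ℂ be holomorphic with primitives h₁, h₃, and define x(u+iv) = (Re h₁, −Im h₁, Re h₃). At every z₀ ∈ U with φ₁(z₀) ≠ 0, the isotropic Gaussian curvature K = (h₁₁h₂₂ − h₁₂²)/(g₁₁g₂₂ − g₁₂²) satisfies K(z₀) = −|(φ₃/φ₁)'(z₀)|² / |φ₁(z₀)|². In particular K ≤ 0 everywhere. -/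
noncomputable section

/-! With `x = Re ∫ (φ₁, i φ₁, φ₃)` one has `x_u = Re (φ₁, i φ₁, φ₃)` and `x_v = Re (i φ₁, -φ₁, i φ₃)`,
so the isotropic metric is conformal with factor `|φ₁|²`. Writing the minimal normal as
`(Re w, Im w, 1)`, orthogonality to `x_u` and `x_v` says `φ₁ w + φ₃ = 0`, i.e. `w = -φ₃/φ₁`.
Then `h₁₁ = Re B`, `h₁₂ = -Im B`, `h₂₂ = -Re B` with `B = φ₃' - φ₁' φ₃/φ₁ = φ₁ (φ₃/φ₁)'`, whence
`K = -|B|²/|φ₁|⁴ = -|(φ₃/φ₁)'|²/|φ₁|²`. -/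

open Complex ComplexConjugate Filter Topology

section Derivatives

variable {f g : ℂ → ℂ} {c d z : ℂ}

theorem fderiv_weierstrassVec_apply (hf : HasDerivAt f c z) (hg : HasDerivAt g d z) (v : ℂ) :
    fderiv ℝ (fun w => weierstrassVec (f w) (g w)) z v = weierstrassVec (c * v) (d * v) := by
  have hf' := hf.hasFDerivAt.restrictScalars ℝ
  have hg' := hg.hasFDerivAt.restrictScalars ℝ
  have H := (reCLM.hasFDerivAt.comp z hf').prodMk
    (((-imCLM).hasFDerivAt.comp z hf').prodMk (reCLM.hasFDerivAt.comp z hg'))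
  have H' : HasFDerivAt (fun w => weierstrassVec (f w) (g w)) _ z := H
  rw [H'.fderiv]
  simp [weierstrassVec, mul_comm]

variable {y : ℂ → ℝ × ℝ × ℝ}

theorem du_eq_weierstrassVec (hy : y =ᶠ[𝓝 z] fun w => weierstrassVec (f w) (g w))
    (hf : HasDerivAt f c z) (hg : HasDerivAt g d z) : du y z = weierstrassVec c d := by
  simpa [du, hy.fderiv_eq] using fderiv_weierstrassVec_apply hf hg 1

theorem dv_eq_weierstrassVec (hy : y =ᶠ[𝓝 z] fun w => weierstrassVec (f w) (g w))
    (hf : HasDerivAt f c z) (hg : HasDerivAt g d z) :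
    dv y z = weierstrassVec (c * I) (d * I) := by
  simpa [dv, hy.fderiv_eq] using fderiv_weierstrassVec_apply hf hg I

end Derivatives

theorem isoInner_weierstrassVec (a b a' b' : ℂ) :
    isoInner (weierstrassVec a b) (weierstrassVec a' b') = (a * conj a').re := by
  simp [isoInner, weierstrassVec]

theorem dot3_weierstrassVec_s11 (p q w : ℂ) :
    dot3 (weierstrassVec p q) (w.re, w.im, 1) = (p * w + q).re := by
  simp only [dot3, weierstrassVec, mul_one, add_re, mul_re]; ring

section FundamentalForms

variable {x : ℂ → ℝ × ℝ × ℝ} {z a b : ℂ}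

theorem g11_eq_norm_sq (hu : du x z = weierstrassVec a b) : g11 x z = ‖a‖ ^ 2 := by
  rw [g11, hu, isoInner_weierstrassVec, mul_conj, ofReal_re, normSq_eq_norm_sq]

theorem g12_eq_zero (hu : du x z = weierstrassVec a b)
    (hv : dv x z = weierstrassVec (a * I) (b * I)) : g12 x z = 0 := by
  rw [g12, hu, hv, isoInner_weierstrassVec, map_mul, conj_I, ← mul_assoc, mul_conj]
  simp

theorem g22_eq_norm_sq (hv : dv x z = weierstrassVec (a * I) (b * I)) : g22 x z = ‖a‖ ^ 2 := by
  rw [g22, hv, isoInner_weierstrassVec, mul_conj, ofReal_re, normSq_eq_norm_sq]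
  simp

theorem Nm_eq_neg_div (hu : du x z = weierstrassVec a b)
    (hv : dv x z = weierstrassVec (a * I) (b * I)) :
    Nm x z = ((-b / a).re, (-b / a).im, 1) := by
  have hcross : cross3 (du x z) (dv x z) = ((b * conj a).re, (b * conj a).im, -normSq a) := by
    simp only [cross3, hu, hv, weierstrassVec, normSq_apply, mul_re, mul_im, conj_re, conj_im,
      I_re, I_im]
    refine Prod.ext ?_ (Prod.ext ?_ ?_) <;> ring
  have hquot : -b / a = -(b * conj a) * ((normSq a)⁻¹ : ℝ) := by
    rw [div_eq_mul_inv, inv_def]; ring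
  rw [Nm, hcross, hquot, re_mul_ofReal, im_mul_ofReal]
  simp only [neg_re, neg_im, neg_mul, div_eq_mul_inv, inv_neg, mul_neg]

end FundamentalForms

theorem Kcurv_eq_neg_norm_sq_div {x : ℂ → ℝ × ℝ × ℝ} {z a b a' b' : ℂ} (ha : a ≠ 0)
    (hu : du x z = weierstrassVec a b) (hv : dv x z = weierstrassVec (a * I) (b * I))
    (huu : du (du x) z = weierstrassVec a' b')
    (huv : du (dv x) z = weierstrassVec (a' * I) (b' * I))
    (hvv : dv (dv x) z = weierstrassVec (a' * I * I) (b' * I * I)) :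
    Kcurv x z = -‖(b' * a - b * a') / a ^ 2‖ ^ 2 / ‖a‖ ^ 2 := by
  set B := a' * (-b / a) + b' with hB
  have hh11 : h11 x z = B.re := by rw [h11, huu, Nm_eq_neg_div hu hv, dot3_weierstrassVec_s11]
  have hh12 : h12 x z = -B.im := by
    rw [h12, huv, Nm_eq_neg_div hu hv, dot3_weierstrassVec_s11, ← mul_I_re]
    congr 1; rw [hB]; ring
  have hh22 : h22 x z = -B.re := by
    rw [h22, hvv, Nm_eq_neg_div hu hv, dot3_weierstrassVec_s11, ← neg_re]
    congr 1; rw [hB]; linear_combination (a' * (-b / a) + b') * I_sq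
  have hBsq : B.re ^ 2 + B.im ^ 2 = ‖a‖ ^ 2 * ‖(b' * a - b * a') / a ^ 2‖ ^ 2 := by
    have hBeq : B = a * ((b' * a - b * a') / a ^ 2) := by rw [hB]; field_simp; ring
    rw [← mul_pow, ← norm_mul, ← hBeq, Complex.sq_norm, normSq_apply]
    ring
  have hna : ‖a‖ ≠ 0 := norm_ne_zero_iff.mpr ha
  rw [Kcurv, hh11, hh12, hh22, g11_eq_norm_sq hu, g12_eq_zero hu hv, g22_eq_norm_sq hv,
    show B.re * -B.re - (-B.im) ^ 2 = -(B.re ^ 2 + B.im ^ 2) by ring, hBsq]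
  field_simp
  ring

/-- For the Weierstrass map x = (Re h₁, −Im h₁, Re h₃) built from the holomorphic curve
φ = (φ₁, iφ₁, φ₃), at every z₀ with φ₁(z₀) ≠ 0 the isotropic Gaussian curvature equals
−|(φ₃/φ₁)'(z₀)|²/|φ₁(z₀)|²; in particular K ≤ 0 everywhere. -/
theorem stmt11 (U : Set ℂ) (hU : IsOpen U) (φ₁ φ₃ h₁ h₃ : ℂ → ℂ)
    (hφ₁ : DifferentiableOn ℂ φ₁ U) (hφ₃ : DifferentiableOn ℂ φ₃ U)
    (hh₁ : ∀ z ∈ U, HasDerivAt h₁ (φ₁ z) z)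
    (hh₃ : ∀ z ∈ U, HasDerivAt h₃ (φ₃ z) z) :
    (∀ z₀ ∈ U, φ₁ z₀ ≠ 0 →
      Kcurv (fun w => ((h₁ w).re, -(h₁ w).im, (h₃ w).re)) z₀ =
        -(‖deriv (fun z => φ₃ z / φ₁ z) z₀‖ ^ 2) / ‖φ₁ z₀‖ ^ 2) ∧
    (∀ z₀ ∈ U, Kcurv (fun w => ((h₁ w).re, -(h₁ w).im, (h₃ w).re)) z₀ ≤ 0) := by
  set x : ℂ → ℝ × ℝ × ℝ := fun w => ((h₁ w).re, -(h₁ w).im, (h₃ w).re)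
  have hu : ∀ z ∈ U, du x z = weierstrassVec (φ₁ z) (φ₃ z) := fun z hz =>
    du_eq_weierstrassVec (y := x) .rfl (hh₁ z hz) (hh₃ z hz)
  have hv : ∀ z ∈ U, dv x z = weierstrassVec (φ₁ z * I) (φ₃ z * I) := fun z hz =>
    dv_eq_weierstrassVec (y := x) .rfl (hh₁ z hz) (hh₃ z hz)
  have hK : ∀ z₀ ∈ U, φ₁ z₀ ≠ 0 →
      Kcurv x z₀ = -(‖deriv (fun z => φ₃ z / φ₁ z) z₀‖ ^ 2) / ‖φ₁ z₀‖ ^ 2 := by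
    intro z₀ hz₀ hne
    have hφ₁' := (hφ₁.differentiableAt (hU.mem_nhds hz₀)).hasDerivAt
    have hφ₃' := (hφ₃.differentiableAt (hU.mem_nhds hz₀)).hasDerivAt
    have hu' : du x =ᶠ[𝓝 z₀] fun w => weierstrassVec (φ₁ w) (φ₃ w) :=
      eventually_of_mem (hU.mem_nhds hz₀) hu
    have hv' : dv x =ᶠ[𝓝 z₀] fun w => weierstrassVec (φ₁ w * I) (φ₃ w * I) :=
      eventually_of_mem (hU.mem_nhds hz₀) hv
    rw [(hφ₃'.fun_div hφ₁' hne).deriv]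
    exact Kcurv_eq_neg_norm_sq_div hne (hu z₀ hz₀) (hv z₀ hz₀)
      (du_eq_weierstrassVec hu' hφ₁' hφ₃')
      (du_eq_weierstrassVec hv' (hφ₁'.mul_const I) (hφ₃'.mul_const I))
      (dv_eq_weierstrassVec hv' (hφ₁'.mul_const I) (hφ₃'.mul_const I))
  refine ⟨hK, fun z₀ hz₀ => ?_⟩
  by_cases hne : φ₁ z₀ = 0
  · -- the metric degenerates at a zero of `φ₁`, and `K` takes the junk value `_ / 0 = 0`
    rw [Kcurv, g11_eq_norm_sq (hu z₀ hz₀), g12_eq_zero (hu z₀ hz₀) (hv z₀ hz₀),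
      g22_eq_norm_sq (hv z₀ hz₀), hne]
    simp
  · rw [hK z₀ hz₀ hne]
    exact div_nonpos_of_nonpos_of_nonneg (neg_nonpos.mpr (sq_nonneg _)) (sq_nonneg _)
end
end

section
/- Let U ⊆ ℂ be open, let F, G : U → ℂ be holomorphic, and define x(u+iv) = (Re h₁, −Im h₁, Re h₃) where h₁' = F and h₃' = −F·G (Weierstrass data φ = (F, iF, −FG)). Then at every z₀ ∈ U with F(z₀) ≠ 0, the minimal normal N_m = (n₁, n₂, 1) satisfies n₁ + i n₂ = G(z₀); that is, the top-view projection of the minimal normal, identified with a complex number, equals the holomorphic function G. -/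
noncomputable section

/-!
The surface is `x = Re ∫ φ` for `φ = (F, iF, -FG)`, so its real differential at `z` sends a
direction `v` to `Re (φ(z) v)`. For `φ = (a, ia, -ag)` the cross product of the images of `1` and
`i` is `-|a|² (Re g, Im g, 1)`, so normalising its third component to `1` leaves `(Re g, Im g, 1)`.
-/

open Complex

/-- `v ↦ Re (φ v)` for `φ = (a, ia, c)`, using `Re (i a v) = -Im (a v)`. -/
def weierstrassDiff (a c v : ℂ) : ℝ × ℝ × ℝ := ((a * v).re, -(a * v).im, (c * v).re)

theorem fderiv_weierstrass {h₁ h₃ : ℂ → ℂ} {a c z : ℂ} (h₁a : HasDerivAt h₁ a z)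
    (h₃c : HasDerivAt h₃ c z) (v : ℂ) :
    fderiv ℝ (fun w => ((h₁ w).re, -(h₁ w).im, (h₃ w).re)) z v = weierstrassDiff a c v := by
  have re₁ := reCLM.hasFDerivAt.comp z (h₁a.hasFDerivAt.restrictScalars ℝ)
  have im₁ := (imCLM.hasFDerivAt.comp z (h₁a.hasFDerivAt.restrictScalars ℝ)).neg
  have re₃ := reCLM.hasFDerivAt.comp z (h₃c.hasFDerivAt.restrictScalars ℝ)
  have hx : HasFDerivAt (fun w => ((h₁ w).re, -(h₁ w).im, (h₃ w).re)) _ z :=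
    re₁.prodMk (im₁.prodMk re₃)
  rw [hx.fderiv]
  simp [weierstrassDiff, mul_comm]

theorem cross3_weierstrassDiff (a g : ℂ) :
    cross3 (weierstrassDiff a (-(a * g)) 1) (weierstrassDiff a (-(a * g)) I) =
      (-normSq a) • ((g.re, g.im, 1) : ℝ × ℝ × ℝ) := by
  simp only [cross3, weierstrassDiff, normSq_apply, mul_one, neg_mul, neg_re, mul_re, mul_im,
    I_re, I_im, Prod.smul_mk, smul_eq_mul]
  refine Prod.ext ?_ (Prod.ext ?_ ?_) <;> dsimp only <;> ring

theorem Nm_eq_of_cross3_eq_smul {x : ℂ → ℝ × ℝ × ℝ} {z : ℂ} {t n₁ n₂ : ℝ} (ht : t ≠ 0)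
    (hcross : cross3 (du x z) (dv x z) = t • ((n₁, n₂, 1) : ℝ × ℝ × ℝ)) :
    Nm x z = (n₁, n₂, 1) := by
  simp only [Nm, hcross, Prod.smul_mk, smul_eq_mul, mul_one]
  rw [mul_div_cancel_left₀ _ ht, mul_div_cancel_left₀ _ ht]

theorem stmt13_general (U : Set ℂ) (F G h₁ h₃ : ℂ → ℂ)
    (hh₁ : ∀ z ∈ U, HasDerivAt h₁ (F z) z)
    (hh₃ : ∀ z ∈ U, HasDerivAt h₃ (-(F z * G z)) z) :
    ∀ z₀ ∈ U, F z₀ ≠ 0 →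
      ((Nm (fun w => ((h₁ w).re, -(h₁ w).im, (h₃ w).re)) z₀).1 : ℂ) +
        ((Nm (fun w => ((h₁ w).re, -(h₁ w).im, (h₃ w).re)) z₀).2.1 : ℂ) * Complex.I =
        G z₀ := by
  intro z₀ hz hFz
  have hdiff := fderiv_weierstrass (hh₁ z₀ hz) (hh₃ z₀ hz)
  have hNm : Nm (fun w => ((h₁ w).re, -(h₁ w).im, (h₃ w).re)) z₀ = ((G z₀).re, (G z₀).im, 1) :=
    Nm_eq_of_cross3_eq_smul (neg_ne_zero.mpr (normSq_pos.mpr hFz).ne')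
      (by rw [du, dv, hdiff, hdiff]; exact cross3_weierstrassDiff _ _)
  rw [hNm]
  exact re_add_im (G z₀)

/-- For the Weierstrass data φ = (F, iF, −FG) (i.e. x = (Re h₁, −Im h₁, Re h₃) with
h₁' = F, h₃' = −F·G), at every z₀ with F(z₀) ≠ 0 the top-view projection of the minimal
normal N_m = (n₁,n₂,1), identified with the complex number n₁ + i n₂, equals G(z₀). -/
theorem stmt13 (U : Set ℂ) (hU : IsOpen U) (F G h₁ h₃ : ℂ → ℂ)
    (hF : DifferentiableOn ℂ F U) (hG : DifferentiableOn ℂ G U)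
    (hh₁ : ∀ z ∈ U, HasDerivAt h₁ (F z) z)
    (hh₃ : ∀ z ∈ U, HasDerivAt h₃ (-(F z * G z)) z) :
    ∀ z₀ ∈ U, F z₀ ≠ 0 →
      ((Nm (fun w => ((h₁ w).re, -(h₁ w).im, (h₃ w).re)) z₀).1 : ℂ) +
        ((Nm (fun w => ((h₁ w).re, -(h₁ w).im, (h₃ w).re)) z₀).2.1 : ℂ) * Complex.I =
        G z₀ :=
  stmt13_general U F G h₁ h₃ hh₁ hh₃
end
end

section
/- Let U ⊆ ℂ be open, let F, G : U → ℂ be holomorphic, and define x(u+iv) = (Re h₁, −Im h₁, Re h₃) where h₁' = F and h₃' = −F·G. Then at every z₀ ∈ U with F(z₀) ≠ 0: g₁₁ = g₂₂ = |F(z₀)|², g₁₂ = 0; the second fundamental form coefficients satisfy h₁₁ = −Re(FG')(z₀), h₁₂ = Im(FG')(z₀), h₂₂ = Re(FG')(z₀); and the isotropic Gaussian curvature is K(z₀) = −|G'(z₀)/F(z₀)|². -/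
noncomputable section

/-!
Writing φ = (F, iF, −FG) for the Weierstrass data, the surface is x = Re ∫ φ, so by the
Cauchy–Riemann equations x_u = Re φ, x_v = Re (iφ), x_uu = Re φ', x_uv = Re (iφ') and
x_vv = −Re φ'. With these, everything reduces to algebra in ℂ: the minimal normal is
(Re G, Im G, 1), and in h_ij = x_ij · N_m the terms containing F' cancel against
φ₃' = −(F'G + FG'), leaving only FG'.
-/

open Complex Topology

def re3 (a b c : ℂ) : ℝ × ℝ × ℝ := (a.re, b.re, c.re)

section Partials

variable {f g k : ℂ → ℂ} {a b c z : ℂ}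

theorem fderiv_re3_apply (hf : HasDerivAt f a z) (hg : HasDerivAt g b z)
    (hk : HasDerivAt k c z) (w : ℂ) :
    fderiv ℝ (fun y => re3 (f y) (g y) (k y)) z w = re3 (w * a) (w * b) (w * c) := by
  have hre : ∀ {h : ℂ → ℂ} {d : ℂ}, HasDerivAt h d z →
      HasFDerivAt (fun y => (h y).re)
        (reCLM.comp (((1 : ℂ →L[ℂ] ℂ).smulRight d).restrictScalars ℝ)) z :=
    fun hd => reCLM.hasFDerivAt.comp z (hd.hasFDerivAt.restrictScalars ℝ)
  have H : HasFDerivAt (fun y => re3 (f y) (g y) (k y)) _ z :=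
    (hre hf).prodMk ((hre hg).prodMk (hre hk))
  rw [H.fderiv]
  simp [re3, mul_comm]

theorem du_re3 (hf : HasDerivAt f a z) (hg : HasDerivAt g b z) (hk : HasDerivAt k c z) :
    du (fun y => re3 (f y) (g y) (k y)) z = re3 a b c := by
  simpa [du] using fderiv_re3_apply hf hg hk 1

theorem dv_re3 (hf : HasDerivAt f a z) (hg : HasDerivAt g b z) (hk : HasDerivAt k c z) :
    dv (fun y => re3 (f y) (g y) (k y)) z = re3 (I * a) (I * b) (I * c) :=
  fderiv_re3_apply hf hg hk I

end Partials

section Congr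

variable {E : Type*} [NormedAddCommGroup E] [NormedSpace ℝ E] {x y : ℂ → E} {z : ℂ}

theorem du_congr (h : x =ᶠ[𝓝 z] y) : du x z = du y z := by
  simp only [du, h.fderiv_eq]

theorem dv_congr (h : x =ᶠ[𝓝 z] y) : dv x z = dv y z := by
  simp only [dv, h.fderiv_eq]

end Congr

section FundamentalForms

variable {x : ℂ → ℝ × ℝ × ℝ} {z A B A' B' : ℂ}

theorem firstFundamentalForm_eq (hu : du x z = re3 A (I * A) (-(A * B)))
    (hv : dv x z = re3 (I * A) (I * (I * A)) (I * -(A * B))) :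
    g11 x z = ‖A‖ ^ 2 ∧ g22 x z = ‖A‖ ^ 2 ∧ g12 x z = 0 := by
  simp only [g11, g22, g12, isoInner, hu, hv, re3, Complex.sq_norm, normSq_apply, I_mul_re,
    I_mul_im]
  refine ⟨?_, ?_, ?_⟩ <;> ring

theorem Nm_eq (hu : du x z = re3 A (I * A) (-(A * B)))
    (hv : dv x z = re3 (I * A) (I * (I * A)) (I * -(A * B))) (hA : A ≠ 0) :
    Nm x z = (B.re, B.im, 1) := by
  have hA' : A.re * A.re + A.im * A.im ≠ 0 := by
    simpa [normSq_apply] using normSq_pos.mpr hA |>.ne'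
  simp only [Nm, cross3, hu, hv, re3, neg_re, neg_im, mul_re, mul_im, I_re, I_im]
  refine Prod.ext ?_ (Prod.ext ?_ rfl) <;>
  · rw [div_eq_iff (by contrapose! hA'; linear_combination -hA')]
    ring

theorem secondFundamentalForm_eq (hN : Nm x z = (B.re, B.im, 1))
    (huu : du (du x) z = re3 A' (I * A') (-(A' * B + A * B')))
    (huv : du (dv x) z = re3 (I * A') (I * (I * A')) (I * -(A' * B + A * B')))
    (hvv : dv (dv x) z =
      re3 (I * (I * A')) (I * (I * (I * A'))) (I * (I * -(A' * B + A * B')))) :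
    h11 x z = -(A * B').re ∧ h12 x z = (A * B').im ∧ h22 x z = (A * B').re := by
  simp only [h11, h12, h22, dot3, hN, huu, huv, hvv, re3, neg_re, neg_im, add_re,
    add_im, mul_re, mul_im, I_re, I_im]
  refine ⟨?_, ?_, ?_⟩ <;> ring

theorem Kcurv_eq_neg_norm_div_sq (hA : A ≠ 0) (hg11 : g11 x z = ‖A‖ ^ 2)
    (hg22 : g22 x z = ‖A‖ ^ 2) (hg12 : g12 x z = 0) (hh11 : h11 x z = -(A * B').re)
    (hh12 : h12 x z = (A * B').im) (hh22 : h22 x z = (A * B').re) :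
    Kcurv x z = -‖B' / A‖ ^ 2 := by
  have hA' : normSq A ≠ 0 := (normSq_pos.mpr hA).ne'
  have hnum : -(A * B').re * (A * B').re - (A * B').im ^ 2 = -(normSq A * normSq B') := by
    rw [← normSq_mul, normSq_apply]
    ring
  rw [Kcurv, hg11, hg22, hg12, hh11, hh12, hh22, hnum, Complex.sq_norm, Complex.sq_norm,
    map_div₀]
  field_simp
  ring

end FundamentalForms

/-- For the Weierstrass data φ = (F, iF, −FG) (i.e. x = (Re h₁, −Im h₁, Re h₃) with
h₁' = F, h₃' = −F·G), at every z₀ with F(z₀) ≠ 0 one has g₁₁ = g₂₂ = |F|², g₁₂ = 0,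
h₁₁ = −Re(FG'), h₁₂ = Im(FG'), h₂₂ = Re(FG'), and K = −|G'/F|². -/
theorem stmt15 (U : Set ℂ) (hU : IsOpen U) (F G h₁ h₃ : ℂ → ℂ)
    (hF : DifferentiableOn ℂ F U) (hG : DifferentiableOn ℂ G U)
    (hh₁ : ∀ z ∈ U, HasDerivAt h₁ (F z) z)
    (hh₃ : ∀ z ∈ U, HasDerivAt h₃ (-(F z * G z)) z) :
    ∀ z₀ ∈ U, F z₀ ≠ 0 →
      g11 (fun w => ((h₁ w).re, -(h₁ w).im, (h₃ w).re)) z₀ = ‖F z₀‖ ^ 2 ∧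
      g22 (fun w => ((h₁ w).re, -(h₁ w).im, (h₃ w).re)) z₀ = ‖F z₀‖ ^ 2 ∧
      g12 (fun w => ((h₁ w).re, -(h₁ w).im, (h₃ w).re)) z₀ = 0 ∧
      h11 (fun w => ((h₁ w).re, -(h₁ w).im, (h₃ w).re)) z₀ = -(F z₀ * deriv G z₀).re ∧
      h12 (fun w => ((h₁ w).re, -(h₁ w).im, (h₃ w).re)) z₀ = (F z₀ * deriv G z₀).im ∧
      h22 (fun w => ((h₁ w).re, -(h₁ w).im, (h₃ w).re)) z₀ = (F z₀ * deriv G z₀).re ∧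
      Kcurv (fun w => ((h₁ w).re, -(h₁ w).im, (h₃ w).re)) z₀ =
        -(‖deriv G z₀ / F z₀‖ ^ 2) := by
  intro z₀ hz₀ hF0
  have hx : (fun w => ((h₁ w).re, -(h₁ w).im, (h₃ w).re))
      = fun w => re3 (h₁ w) (I * h₁ w) (h₃ w) := by
    funext w
    simp [re3]
  have hU₀ := hU.mem_nhds hz₀
  have hF₁ := (hF.differentiableAt hU₀).hasDerivAt
  have hFG := hF₁.mul (hG.differentiableAt hU₀).hasDerivAt
  have hxu : du (fun w => re3 (h₁ w) (I * h₁ w) (h₃ w)) =ᶠ[𝓝 z₀]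
      fun w => re3 (F w) (I * F w) (-(F w * G w)) := by
    filter_upwards [hU₀] with z hz
    exact du_re3 (hh₁ z hz) ((hh₁ z hz).const_mul I) (hh₃ z hz)
  have hxv : dv (fun w => re3 (h₁ w) (I * h₁ w) (h₃ w)) =ᶠ[𝓝 z₀]
      fun w => re3 (I * F w) (I * (I * F w)) (I * -(F w * G w)) := by
    filter_upwards [hU₀] with z hz
    exact dv_re3 (hh₁ z hz) ((hh₁ z hz).const_mul I) (hh₃ z hz)
  have huu := (du_congr hxu).trans (du_re3 hF₁ (hF₁.const_mul I) hFG.neg)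
  have huv := (du_congr hxv).trans
    (du_re3 (hF₁.const_mul I) ((hF₁.const_mul I).const_mul I) (hFG.neg.const_mul I))
  have hvv := (dv_congr hxv).trans
    (dv_re3 (hF₁.const_mul I) ((hF₁.const_mul I).const_mul I) (hFG.neg.const_mul I))
  obtain ⟨G11, G22, G12⟩ := firstFundamentalForm_eq hxu.eq_of_nhds hxv.eq_of_nhds
  obtain ⟨H11, H12, H22⟩ :=
    secondFundamentalForm_eq (Nm_eq hxu.eq_of_nhds hxv.eq_of_nhds hF0) huu huv hvv
  rw [hx]
  exact ⟨G11, G22, G12, H11, H12, H22,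
    Kcurv_eq_neg_norm_div_sq hF0 G11 G22 G12 H11 H12 H22⟩
end
end

section
/- Let U ⊆ ℂ be open, let F, G : U → ℂ be holomorphic with G nowhere zero, and define x(u+iv) = (Re h₁, Im h₁, Re h₃) where h₁' = F and h₃' = −F/G. Then at every z₀ ∈ U with F(z₀) ≠ 0: g₁₁ = g₂₂ = |F(z₀)|², g₁₂ = 0, and the isotropic Gaussian curvature is K(z₀) = −|G'(z₀)/(F(z₀)·G(z₀)²)|². -/
noncomputable section

/-!
The real differential of `w ↦ (Re f, Im f, Re g)` sends `v` to
`(Re (v f'), Im (v f'), Re (v g'))`, so `x_v` is `x_u` with `f', g'` multiplied by `i`: the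
parametrization is conformal for the isotropic metric, with `g₁₁ = g₂₂ = |f'|²`.
The minimal normal is `(Re n, Im n, 1)` with `n = -conj (g'/f')`, and pairing it with the
second derivatives gives `h₁₁ = -h₂₂ = Re w`, `h₁₂ = Re (i w)` for `w = g'' - f'' g'/f'`.
Hence `K = -|w|²/|f'|⁴`. For `f' = F`, `g' = -F/G` one finds `w = F G'/G²`.
-/

open Complex ComplexConjugate Topology

def reImRe (c d : ℂ) : ℝ × ℝ × ℝ := (c.re, c.im, d.re)

section Algebra

lemma isoInner_reImRe_self (c d d' : ℂ) : isoInner (reImRe c d) (reImRe c d') = normSq c :=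
  (normSq_apply c).symm

lemma isoInner_reImRe_I_mul (c d d' : ℂ) : isoInner (reImRe c d) (reImRe (I * c) d') = 0 := by
  simp only [isoInner, reImRe, mul_re, mul_im, I_re, I_im]
  ring

lemma cross3_reImRe_I_mul (c d : ℂ) :
    cross3 (reImRe c d) (reImRe (I * c) (I * d)) =
      (-(conj c * d).re, (conj c * d).im, normSq c) := by
  simp only [cross3, reImRe, mul_re, mul_im, conj_re, conj_im, I_re, I_im, normSq_apply]
  ext <;> simp only <;> ring

lemma dot3_reImRe (a b n : ℂ) :
    dot3 (reImRe a b) (n.re, n.im, 1) = (a * conj n + b).re := by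
  simp only [dot3, reImRe, add_re, mul_re, conj_re, conj_im]
  ring

end Algebra

section Calculus

variable {f g : ℂ → ℂ} {c d z : ℂ}

lemma fderiv_reImRe_apply (hf : HasDerivAt f c z) (hg : HasDerivAt g d z) (v : ℂ) :
    fderiv ℝ (fun w => reImRe (f w) (g w)) z v = reImRe (v * c) (v * d) := by
  have hf' := hf.hasFDerivAt.restrictScalars ℝ
  have hg' := hg.hasFDerivAt.restrictScalars ℝ
  have h : HasFDerivAt (fun w => reImRe (f w) (g w)) _ z :=
    (reCLM.hasFDerivAt.comp z hf').prodMk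
      ((imCLM.hasFDerivAt.comp z hf').prodMk (reCLM.hasFDerivAt.comp z hg'))
  rw [h.fderiv]
  rfl

lemma du_reImRe (hf : HasDerivAt f c z) (hg : HasDerivAt g d z) :
    du (fun w => reImRe (f w) (g w)) z = reImRe c d := by
  rw [du, fderiv_reImRe_apply hf hg, one_mul, one_mul]

lemma dv_reImRe (hf : HasDerivAt f c z) (hg : HasDerivAt g d z) :
    dv (fun w => reImRe (f w) (g w)) z = reImRe (I * c) (I * d) :=
  fderiv_reImRe_apply hf hg I

end Calculus

section Surface

variable {f g f' g' : ℂ → ℂ} {z₀ a b c d : ℂ}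

local notation "x" => fun w => reImRe (f w) (g w)

lemma du_reImRe_eventuallyEq (hf : ∀ᶠ z in 𝓝 z₀, HasDerivAt f (f' z) z)
    (hg : ∀ᶠ z in 𝓝 z₀, HasDerivAt g (g' z) z) :
    du x =ᶠ[𝓝 z₀] fun w => reImRe (f' w) (g' w) :=
  hf.and hg |>.mono fun _ h => du_reImRe h.1 h.2

lemma dv_reImRe_eventuallyEq (hf : ∀ᶠ z in 𝓝 z₀, HasDerivAt f (f' z) z)
    (hg : ∀ᶠ z in 𝓝 z₀, HasDerivAt g (g' z) z) :
    dv x =ᶠ[𝓝 z₀] fun w => reImRe (I * f' w) (I * g' w) :=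
  hf.and hg |>.mono fun _ h => dv_reImRe h.1 h.2

lemma Nm_reImRe (hf : HasDerivAt f c z₀) (hg : HasDerivAt g d z₀) (hc : c ≠ 0) :
    Nm x z₀ = ((-conj (d / c)).re, (-conj (d / c)).im, 1) := by
  have hnormSq : normSq c ≠ 0 := normSq_eq_zero.not.mpr hc
  simp only [Nm, du_reImRe hf hg, dv_reImRe hf hg, cross3_reImRe_I_mul]
  refine Prod.ext ?_ (Prod.ext ?_ rfl) <;>
    simp only [neg_re, neg_im, conj_re, conj_im, div_re, div_im, mul_re, mul_im,
      normSq_apply] at hnormSq ⊢ <;>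
    field_simp <;> ring

lemma g11_reImRe (hf : HasDerivAt f c z₀) (hg : HasDerivAt g d z₀) :
    g11 x z₀ = normSq c := by
  rw [g11, du_reImRe hf hg, isoInner_reImRe_self]

lemma g22_reImRe (hf : HasDerivAt f c z₀) (hg : HasDerivAt g d z₀) :
    g22 x z₀ = normSq c := by
  rw [g22, dv_reImRe hf hg, isoInner_reImRe_self, normSq_mul, normSq_I, one_mul]

lemma g12_reImRe (hf : HasDerivAt f c z₀) (hg : HasDerivAt g d z₀) :
    g12 x z₀ = 0 := by
  rw [g12, du_reImRe hf hg, dv_reImRe hf hg, isoInner_reImRe_I_mul]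

lemma h11_reImRe (hf : ∀ᶠ z in 𝓝 z₀, HasDerivAt f (f' z) z)
    (hg : ∀ᶠ z in 𝓝 z₀, HasDerivAt g (g' z) z)
    (ha : HasDerivAt f' a z₀) (hb : HasDerivAt g' b z₀) (hc : f' z₀ ≠ 0) :
    h11 x z₀ = (b - a * (g' z₀ / f' z₀)).re := by
  rw [h11, du, (du_reImRe_eventuallyEq hf hg).fderiv_eq, ← du, du_reImRe ha hb,
    Nm_reImRe hf.self_of_nhds hg.self_of_nhds hc, dot3_reImRe, map_neg, conj_conj]
  ring_nf

lemma h12_reImRe (hf : ∀ᶠ z in 𝓝 z₀, HasDerivAt f (f' z) z)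
    (hg : ∀ᶠ z in 𝓝 z₀, HasDerivAt g (g' z) z)
    (ha : HasDerivAt f' a z₀) (hb : HasDerivAt g' b z₀) (hc : f' z₀ ≠ 0) :
    h12 x z₀ = (I * (b - a * (g' z₀ / f' z₀))).re := by
  rw [h12, du, (dv_reImRe_eventuallyEq hf hg).fderiv_eq, ← du,
    du_reImRe (ha.const_mul I) (hb.const_mul I), Nm_reImRe hf.self_of_nhds hg.self_of_nhds hc,
    dot3_reImRe, map_neg, conj_conj]
  ring_nf

lemma h22_reImRe (hf : ∀ᶠ z in 𝓝 z₀, HasDerivAt f (f' z) z)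
    (hg : ∀ᶠ z in 𝓝 z₀, HasDerivAt g (g' z) z)
    (ha : HasDerivAt f' a z₀) (hb : HasDerivAt g' b z₀) (hc : f' z₀ ≠ 0) :
    h22 x z₀ = -(b - a * (g' z₀ / f' z₀)).re := by
  rw [h22, dv, (dv_reImRe_eventuallyEq hf hg).fderiv_eq, ← dv,
    dv_reImRe (ha.const_mul I) (hb.const_mul I), Nm_reImRe hf.self_of_nhds hg.self_of_nhds hc,
    dot3_reImRe, map_neg, conj_conj, ← neg_re]
  congr 1
  linear_combination (b - a * (g' z₀ / f' z₀)) * I_sq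

theorem Kcurv_reImRe (hf : ∀ᶠ z in 𝓝 z₀, HasDerivAt f (f' z) z)
    (hg : ∀ᶠ z in 𝓝 z₀, HasDerivAt g (g' z) z)
    (ha : HasDerivAt f' a z₀) (hb : HasDerivAt g' b z₀) (hc : f' z₀ ≠ 0) :
    Kcurv x z₀ = -normSq (b - a * (g' z₀ / f' z₀)) / normSq (f' z₀) ^ 2 := by
  rw [Kcurv, h11_reImRe hf hg ha hb hc, h12_reImRe hf hg ha hb hc,
    h22_reImRe hf hg ha hb hc, g11_reImRe hf.self_of_nhds hg.self_of_nhds,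
    g22_reImRe hf.self_of_nhds hg.self_of_nhds, g12_reImRe hf.self_of_nhds hg.self_of_nhds,
    normSq_apply (b - _)]
  simp only [mul_re, I_re, I_im]
  ring

end Surface

/-- For the Weierstrass data φ = (F, −iF, −F/G) (i.e. x = (Re h₁, Im h₁, Re h₃) with
h₁' = F, h₃' = −F/G and G nowhere zero), at every z₀ with F(z₀) ≠ 0 one has
g₁₁ = g₂₂ = |F|², g₁₂ = 0, and K = −|G'/(F·G²)|². -/
theorem stmt16 (U : Set ℂ) (hU : IsOpen U) (F G h₁ h₃ : ℂ → ℂ)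
    (hF : DifferentiableOn ℂ F U) (hG : DifferentiableOn ℂ G U)
    (hGne : ∀ z ∈ U, G z ≠ 0)
    (hh₁ : ∀ z ∈ U, HasDerivAt h₁ (F z) z)
    (hh₃ : ∀ z ∈ U, HasDerivAt h₃ (-(F z / G z)) z) :
    ∀ z₀ ∈ U, F z₀ ≠ 0 →
      g11 (fun w => ((h₁ w).re, (h₁ w).im, (h₃ w).re)) z₀ = ‖F z₀‖ ^ 2 ∧
      g22 (fun w => ((h₁ w).re, (h₁ w).im, (h₃ w).re)) z₀ = ‖F z₀‖ ^ 2 ∧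
      g12 (fun w => ((h₁ w).re, (h₁ w).im, (h₃ w).re)) z₀ = 0 ∧
      Kcurv (fun w => ((h₁ w).re, (h₁ w).im, (h₃ w).re)) z₀ =
        -(‖deriv G z₀ / (F z₀ * (G z₀) ^ 2)‖ ^ 2) := by
  intro z₀ hz₀ hFz₀
  have hU₀ : U ∈ 𝓝 z₀ := hU.mem_nhds hz₀
  have hF' : HasDerivAt F (deriv F z₀) z₀ := ((hF z₀ hz₀).differentiableAt hU₀).hasDerivAt
  have hG' : HasDerivAt G (deriv G z₀) z₀ := ((hG z₀ hz₀).differentiableAt hU₀).hasDerivAt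
  have hw : -((deriv F z₀ * G z₀ - F z₀ * deriv G z₀) / G z₀ ^ 2)
      - deriv F z₀ * (-(F z₀ / G z₀) / F z₀) = F z₀ * deriv G z₀ / G z₀ ^ 2 := by
    field_simp
    ring
  refine ⟨(g11_reImRe (hh₁ z₀ hz₀) (hh₃ z₀ hz₀)).trans (normSq_eq_norm_sq _),
    (g22_reImRe (hh₁ z₀ hz₀) (hh₃ z₀ hz₀)).trans (normSq_eq_norm_sq _),
    g12_reImRe (hh₁ z₀ hz₀) (hh₃ z₀ hz₀), ?_⟩
  refine (Kcurv_reImRe (Filter.eventually_of_mem hU₀ hh₁) (Filter.eventually_of_mem hU₀ hh₃)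
    hF' (hF'.div hG' (hGne z₀ hz₀)).neg hFz₀).trans ?_
  rw [hw, ← normSq_eq_norm_sq, map_div₀, map_div₀, map_mul, map_mul, map_pow]
  have := normSq_eq_zero.not.mpr hFz₀
  field_simp
end
end

section
/- Let U ⊆ ℂ be open, let F, G : U → ℂ be holomorphic, let x(u+iv) = (Re h₁, −Im h₁, Re h₃) with h₁' = F, h₃' = −F·G, and let z₀ ∈ U satisfy F(z₀) ≠ 0. For every v = (v₁,v₂) ∈ ℝ² the second fundamental form satisfies h₁₁v₁² + 2h₁₂v₁v₂ + h₂₂v₂² = −Re[F(z₀)G'(z₀)(v₁ + iv₂)²]. Consequently, a nonzero tangent vector v₁x_u + v₂x_v points to an asymptotic direction of the minimal surface at z₀ if and only if F(z₀)G'(z₀)(v₁ + iv₂)² is purely imaginary. -/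
/-!
The surface is the real part of `∫ (F, iF, -FG)`. Holomorphy makes every partial derivative
the real part of a complex derivative times `1` or `i`: `x_u, x_v` come from `F` and `-FG`, which
forces the minimal normal to be `(Re G, Im G, 1)`, and the second partials come from `F'` and
`-(FG)'`. Against that normal each `hᵢⱼ` is the real part of `F'G - (FG)' = -FG'` times `1`, `i`
or `i²`, and these three add up to `-Re[FG'(v₁ + iv₂)²]`.
-/

noncomputable section

open Complex Filter Topology

-- `isoCoords a b = Re (a, i a, b)`; the surface is `w ↦ isoCoords (h₁ w) (h₃ w)`.
def isoCoords (a b : ℂ) : ℝ × ℝ × ℝ := (a.re, -a.im, b.re)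

lemma fderiv_isoCoords_apply {p q : ℂ → ℂ} {c d z : ℂ}
    (hp : HasDerivAt p c z) (hq : HasDerivAt q d z) (e : ℂ) :
    fderiv ℝ (fun w => isoCoords (p w) (q w)) z e = isoCoords (c * e) (d * e) := by
  have hp' := hp.hasFDerivAt.restrictScalars ℝ
  have hq' := hq.hasFDerivAt.restrictScalars ℝ
  have h := (reCLM.hasFDerivAt.comp z hp').prodMk
    (((-imCLM).hasFDerivAt.comp z hp').prodMk (reCLM.hasFDerivAt.comp z hq'))
  rw [show (fun w => isoCoords (p w) (q w)) =
      fun w => ((reCLM ∘ p) w, ((-imCLM) ∘ p) w, (reCLM ∘ q) w) from rfl, h.fderiv]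
  simp [isoCoords, mul_comm]

section Partials

variable {p q P Q : ℂ → ℂ} {z : ℂ}

lemma du_isoCoords_eventuallyEq (hp : ∀ᶠ w in 𝓝 z, HasDerivAt p (P w) w)
    (hq : ∀ᶠ w in 𝓝 z, HasDerivAt q (Q w) w) :
    du (fun w => isoCoords (p w) (q w)) =ᶠ[𝓝 z] fun w => isoCoords (P w) (Q w) := by
  filter_upwards [hp, hq] with w hpw hqw
  simpa [du] using fderiv_isoCoords_apply hpw hqw 1

lemma dv_isoCoords_eventuallyEq (hp : ∀ᶠ w in 𝓝 z, HasDerivAt p (P w) w)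
    (hq : ∀ᶠ w in 𝓝 z, HasDerivAt q (Q w) w) :
    dv (fun w => isoCoords (p w) (q w)) =ᶠ[𝓝 z] fun w => isoCoords (P w * I) (Q w * I) := by
  filter_upwards [hp, hq] with w hpw hqw
  exact fderiv_isoCoords_apply hpw hqw I

variable {c d : ℂ} (hp : ∀ᶠ w in 𝓝 z, HasDerivAt p (P w) w)
  (hq : ∀ᶠ w in 𝓝 z, HasDerivAt q (Q w) w) (hP : HasDerivAt P c z) (hQ : HasDerivAt Q d z)
include hp hq hP hQ

lemma du_du_isoCoords : du (du fun w => isoCoords (p w) (q w)) z = isoCoords c d := by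
  rw [du, (du_isoCoords_eventuallyEq hp hq).fderiv_eq]
  simpa using fderiv_isoCoords_apply hP hQ 1

lemma du_dv_isoCoords : du (dv fun w => isoCoords (p w) (q w)) z = isoCoords (c * I) (d * I) := by
  rw [du, (dv_isoCoords_eventuallyEq hp hq).fderiv_eq]
  simpa using fderiv_isoCoords_apply (hP.mul_const I) (hQ.mul_const I) 1

lemma dv_dv_isoCoords :
    dv (dv fun w => isoCoords (p w) (q w)) z = isoCoords (c * I * I) (d * I * I) := by
  rw [dv, (dv_isoCoords_eventuallyEq hp hq).fderiv_eq]
  exact fderiv_isoCoords_apply (hP.mul_const I) (hQ.mul_const I) I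

end Partials

lemma Nm_eq_of_partials {x : ℂ → ℝ × ℝ × ℝ} {z a g : ℂ} (ha : a ≠ 0)
    (hu : du x z = isoCoords a (-(a * g))) (hv : dv x z = isoCoords (a * I) (-(a * g) * I)) :
    Nm x z = (g.re, g.im, 1) := by
  have hna : a.re * a.re + a.im * a.im ≠ 0 := by
    rw [← normSq_apply, Ne, normSq_eq_zero]; exact ha
  simp only [Nm, cross3, hu, hv, isoCoords, mul_re, mul_im, neg_re, neg_im, I_re, I_im,
    Prod.mk.injEq, and_true]
  constructor <;> rw [div_eq_iff (by contrapose! hna; linear_combination -hna)] <;> ring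

lemma dot3_isoCoords (a b g : ℂ) : dot3 (isoCoords a b) (g.re, g.im, 1) = (a * g + b).re := by
  simp only [dot3, isoCoords, add_re, mul_re]
  ring

lemma secondFundamentalForm_eq_s18 {x : ℂ → ℝ × ℝ × ℝ} {z c d g : ℂ}
    (hN : Nm x z = (g.re, g.im, 1)) (huu : du (du x) z = isoCoords c d)
    (huv : du (dv x) z = isoCoords (c * I) (d * I))
    (hvv : dv (dv x) z = isoCoords (c * I * I) (d * I * I)) (v₁ v₂ : ℝ) :
    h11 x z * v₁ ^ 2 + 2 * h12 x z * v₁ * v₂ + h22 x z * v₂ ^ 2 =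
      ((c * g + d) * ((v₁ : ℂ) + (v₂ : ℂ) * I) ^ 2).re := by
  simp only [h11, h12, h22, hN, huu, huv, hvv, dot3_isoCoords]
  simp only [pow_two, mul_re, mul_im, add_re, add_im, I_re, I_im, ofReal_re, ofReal_im]
  ring

/-- For the Weierstrass data φ = (F, iF, −FG) and z₀ with F(z₀) ≠ 0, the second
fundamental form satisfies II(v,v) = h₁₁v₁² + 2h₁₂v₁v₂ + h₂₂v₂²
= −Re[F(z₀)G'(z₀)(v₁ + iv₂)²] for every v = (v₁,v₂) ∈ ℝ²; consequently a nonzero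
tangent vector v₁x_u + v₂x_v points to an asymptotic direction iff
F(z₀)G'(z₀)(v₁ + iv₂)² is purely imaginary. -/
theorem stmt18 (U : Set ℂ) (hU : IsOpen U) (F G h₁ h₃ : ℂ → ℂ)
    (hF : DifferentiableOn ℂ F U) (hG : DifferentiableOn ℂ G U)
    (hh₁ : ∀ z ∈ U, HasDerivAt h₁ (F z) z)
    (hh₃ : ∀ z ∈ U, HasDerivAt h₃ (-(F z * G z)) z)
    (z₀ : ℂ) (hz₀ : z₀ ∈ U) (hFz₀ : F z₀ ≠ 0) :
    ∀ v₁ v₂ : ℝ,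
      (h11 (fun w => ((h₁ w).re, -(h₁ w).im, (h₃ w).re)) z₀ * v₁ ^ 2 +
          2 * h12 (fun w => ((h₁ w).re, -(h₁ w).im, (h₃ w).re)) z₀ * v₁ * v₂ +
          h22 (fun w => ((h₁ w).re, -(h₁ w).im, (h₃ w).re)) z₀ * v₂ ^ 2 =
        -(F z₀ * deriv G z₀ * ((v₁ : ℂ) + (v₂ : ℂ) * Complex.I) ^ 2).re) ∧
      ((v₁, v₂) ≠ (0, 0) →
        (h11 (fun w => ((h₁ w).re, -(h₁ w).im, (h₃ w).re)) z₀ * v₁ ^ 2 +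
            2 * h12 (fun w => ((h₁ w).re, -(h₁ w).im, (h₃ w).re)) z₀ * v₁ * v₂ +
            h22 (fun w => ((h₁ w).re, -(h₁ w).im, (h₃ w).re)) z₀ * v₂ ^ 2 = 0 ↔
          (F z₀ * deriv G z₀ * ((v₁ : ℂ) + (v₂ : ℂ) * Complex.I) ^ 2).re = 0)) := by
  intro v₁ v₂
  have hU₀ : U ∈ 𝓝 z₀ := hU.mem_nhds hz₀
  have hF₀ : HasDerivAt F (deriv F z₀) z₀ := (hF.differentiableAt hU₀).hasDerivAt
  have hG₀ : HasDerivAt G (deriv G z₀) z₀ := (hG.differentiableAt hU₀).hasDerivAt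
  have hFG₀ := (hF₀.mul hG₀).neg
  have hh₁' : ∀ᶠ w in 𝓝 z₀, HasDerivAt h₁ (F w) w := eventually_of_mem hU₀ hh₁
  have hh₃' : ∀ᶠ w in 𝓝 z₀, HasDerivAt h₃ (-(F w * G w)) w := eventually_of_mem hU₀ hh₃
  have hN : Nm (fun w => isoCoords (h₁ w) (h₃ w)) z₀ = ((G z₀).re, (G z₀).im, 1) :=
    Nm_eq_of_partials hFz₀ (du_isoCoords_eventuallyEq hh₁' hh₃').eq_of_nhds
      (dv_isoCoords_eventuallyEq hh₁' hh₃').eq_of_nhds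
  have hII := secondFundamentalForm_eq_s18 hN (du_du_isoCoords hh₁' hh₃' hF₀ hFG₀)
    (du_dv_isoCoords hh₁' hh₃' hF₀ hFG₀) (dv_dv_isoCoords hh₁' hh₃' hF₀ hFG₀) v₁ v₂
  rw [show deriv F z₀ * G z₀ + -(deriv F z₀ * G z₀ + F z₀ * deriv G z₀) =
    -(F z₀ * deriv G z₀) by ring, neg_mul, neg_re] at hII
  exact ⟨hII, fun _ => (Eq.congr_left hII).trans neg_eq_zero⟩
end
end
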